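/- arXiv:2508.00134 — 3 statements merged into one kernel-verified Lean document; each statement's English description precedes it below -/
import Mathlib

section
/- Let V be a finite set and let p : V → ℝ² be such that for all distinct v, w ∈ V the vector p_v − p_w is nonzero and satisfies |(p_v − p_w)₁| ≠ |(p_v − p_w)₂|. Let G₁ be the simple graph on V in which distinct v, w are adjacent iff |(p_v − p_w)₁| > |(p_v − p_w)₂|, and let G₂ be the complement of G₁ (so distinct v, w are adjacent in G₂ iff |(p_v − p_w)₂| > |(p_v − p_w)₁|). Then G₁ and G₂ are perfect graphs; in particular, both are odd-hole-free and odd-antihole-free. -/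
/-- A finite simple graph is perfect if every induced subgraph has chromatic number
equal to its clique number. -/
def IsPerfect {V : Type*} (H : SimpleGraph V) : Prop :=
  ∀ s : Set V, (H.induce s).chromaticNumber = ((H.induce s).cliqueNum : ℕ∞)

/-- `H` has an odd hole: an induced cycle of odd length at least `5`. -/
def HasOddHole {V : Type*} (H : SimpleGraph V) : Prop :=
  ∃ k : ℕ, 5 ≤ k ∧ Odd k ∧ ∃ f : Fin k ↪ V,
    ∀ a b : Fin k, H.Adj (f a) (f b) ↔ (SimpleGraph.cycleGraph k).Adj a b

/-- `H` has an odd antihole: an induced subgraph which is the complement of an odd cycle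
of length at least `5`. -/
def HasOddAntihole {V : Type*} (H : SimpleGraph V) : Prop :=
  ∃ k : ℕ, 5 ≤ k ∧ Odd k ∧ ∃ f : Fin k ↪ V,
    ∀ a b : Fin k, H.Adj (f a) (f b) ↔ ((SimpleGraph.cycleGraph k)ᶜ).Adj a b

/-!
In the rotated coordinates `s = x + y`, `d = x - y` we have `|Δy| < |Δx|` iff `Δs` and `Δd`
have the same sign. Hence `G₁` is the comparability graph of the strict dominance order
`s v < s w ∧ d v < d w`, and `G₂` that of `s v < s w ∧ d w < d v`. Comparability graphs are
perfect (colour each vertex by its height, as in Mirsky's theorem) and have no odd holes (the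
edges of an induced cycle alternate in direction, which 2-colours the cycle). Since
`|Δx| ≠ |Δy|`, the graphs `G₁` and `G₂` are complementary, so an odd antihole in one is an odd
hole in the other.
-/

open SimpleGraph Order

namespace SimpleGraph

lemma cycleGraph_adj_add_one {n : ℕ} (i : Fin (n + 2)) : (cycleGraph (n + 2)).Adj i (i + 1) :=
  cycleGraph_adj.2 (.inr (add_sub_cancel_left i 1))

lemma cycleGraph_not_adj_add_two {n : ℕ} (i : Fin (n + 4)) :
    ¬ (cycleGraph (n + 4)).Adj i (i + 2) := by
  rw [cycleGraph_adj, add_sub_cancel_left, sub_add_cancel_left, neg_eq_iff_eq_neg]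
  simp [Fin.ext_iff, Fin.val_neg, Nat.mod_eq_of_lt (show 2 < n + 4 by omega)]

def comparabilityGraph (α : Type*) [Preorder α] : SimpleGraph α :=
  fromRel (· < ·)

section ComparabilityGraph

variable {α : Type*} [Preorder α]

lemma comparabilityGraph_adj {a b : α} : (comparabilityGraph α).Adj a b ↔ a < b ∨ b < a :=
  (fromRel_adj _ _ _).trans (and_iff_right_of_imp fun h => h.elim LT.lt.ne LT.lt.ne')

lemma induce_comparabilityGraph (s : Set α) :
    (comparabilityGraph α).induce s = comparabilityGraph s := by
  ext a b
  simp only [comap_adj, Function.Embedding.subtype_apply, comparabilityGraph_adj,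
    Subtype.coe_lt_coe]

lemma length_lt_cliqueNum_comparabilityGraph [Finite α] (p : LTSeries α) :
    p.length < (comparabilityGraph α).cliqueNum := by
  classical
  have hclique : (comparabilityGraph α).IsClique (Finset.univ.image p : Set α) := by
    simp only [Finset.coe_image, Finset.coe_univ, Set.image_univ]
    rintro _ ⟨i, rfl⟩ _ ⟨j, rfl⟩ hij
    exact comparabilityGraph_adj.2 <|
      (lt_or_gt_of_ne (ne_of_apply_ne p hij)).imp (p.strictMono ·) (p.strictMono ·)
  have := hclique.card_le_cliqueNum
  rw [Finset.card_image_of_injective _ p.strictMono.injective, Finset.card_univ,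
    Fintype.card_fin] at this
  omega

lemma height_lt_cliqueNum_comparabilityGraph [Finite α] (a : α) :
    height a < (comparabilityGraph α).cliqueNum := by
  by_contra! h
  obtain ⟨p, -, hp⟩ := exists_series_of_le_height a h
  exact (length_lt_cliqueNum_comparabilityGraph p).ne hp

theorem chromaticNumber_comparabilityGraph_eq_cliqueNum [Finite α] :
    (comparabilityGraph α).chromaticNumber = (comparabilityGraph α).cliqueNum := by
  have hlt := height_lt_cliqueNum_comparabilityGraph (α := α)
  have hfin (a : α) : height a ≠ ⊤ := ((hlt a).trans (ENat.natCast_lt_top _)).ne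
  let byHeight : (comparabilityGraph α).Coloring (Fin (comparabilityGraph α).cliqueNum) :=
    Coloring.mk (fun a => ⟨(height a).toNat, by
      exact_mod_cast (ENat.natCast_toNat (hfin a)).symm ▸ hlt a⟩) <| by
      intro a b hab heq
      have : height a = height b := by
        rw [← ENat.natCast_toNat (hfin a), ← ENat.natCast_toNat (hfin b)]
        exact congrArg _ (Fin.mk.inj heq)
      rcases comparabilityGraph_adj.1 hab with h | h
      · exact (height_strictMono h (hfin a).lt_top).ne this
      · exact (height_strictMono h (hfin b).lt_top).ne this.symm
  exact le_antisymm (by simpa using byHeight.colorable.chromaticNumber_le)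
    (comparabilityGraph α).cliqueNum_le_chromaticNumber

theorem isPerfect_comparabilityGraph [Finite α] : IsPerfect (comparabilityGraph α) := by
  intro s
  rw [induce_comparabilityGraph]
  exact chromaticNumber_comparabilityGraph_eq_cliqueNum

lemma lt_iff_not_lt_of_comparabilityGraph_adj {a b c : α} (hab : (comparabilityGraph α).Adj a b)
    (hbc : (comparabilityGraph α).Adj b c) (hac : ¬ (comparabilityGraph α).Adj a c) :
    a < b ↔ ¬ b < c := by
  rw [comparabilityGraph_adj] at hab hbc hac
  refine ⟨fun h h' => hac (.inl (h.trans h')), fun h => ?_⟩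
  have hcb := hbc.resolve_left h
  exact hab.resolve_right fun hba => hac (.inr (hcb.trans hba))

theorem not_hasOddHole_comparabilityGraph : ¬ HasOddHole (comparabilityGraph α) := by
  classical
  rintro ⟨k, hk, hodd, f, hf⟩
  obtain ⟨n, rfl⟩ : ∃ n, k = n + 5 := ⟨k - 5, by omega⟩
  have alternate (i : Fin (n + 5)) : f i < f (i + 1) ↔ ¬ f (i + 1) < f (i + 1 + 1) := by
    refine lt_iff_not_lt_of_comparabilityGraph_adj ((hf _ _).2 (cycleGraph_adj_add_one i))
      ((hf _ _).2 (cycleGraph_adj_add_one _)) ?_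
    rw [hf, add_assoc, show (1 + 1 : Fin (n + 5)) = 2 from rfl]
    exact cycleGraph_not_adj_add_two i
  let byDirection : (cycleGraph (n + 5)).Coloring Bool :=
    Coloring.mk (fun i => f i < f (i + 1)) <| by
      intro i j hij
      rcases cycleGraph_adj.1 hij with h | h
      · rw [sub_eq_iff_eq_add'.1 h, ne_eq, decide_eq_decide, alternate j]; tauto
      · rw [sub_eq_iff_eq_add'.1 h, ne_eq, decide_eq_decide, alternate i]; tauto
  have := byDirection.colorable.chromaticNumber_le
  rw [chromaticNumber_cycleGraph_of_odd _ (by omega) hodd] at this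
  norm_num at this

end ComparabilityGraph

end SimpleGraph

theorem isPerfect_and_not_hasOddHole_fromRel {V : Type*} [Finite V] (r : V → V → Prop)
    [IsStrictOrder V r] : IsPerfect (fromRel r) ∧ ¬ HasOddHole (fromRel r) :=
  let := partialOrderOfSO r
  ⟨isPerfect_comparabilityGraph, not_hasOddHole_comparabilityGraph⟩

theorem isPerfect_and_not_hasOddHole_fromRel_of_iff_mul_pos {V β : Type*} [Finite V] [Ring β]
    [LinearOrder β] [IsStrictOrderedRing β] {R : V → V → Prop} (f g : V → β)
    (hR : ∀ v w, R v w ↔ 0 < (f v - f w) * (g v - g w)) :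
    IsPerfect (fromRel R) ∧ ¬ HasOddHole (fromRel R) := by
  let dominates (v w : V) : Prop := f v < f w ∧ g v < g w
  have : IsStrictOrder V dominates :=
    { irrefl := fun _ h => lt_irrefl _ h.1
      trans := fun _ _ _ h h' => ⟨h.1.trans h'.1, h.2.trans h'.2⟩ }
  have : fromRel R = fromRel dominates := by
    ext v w
    simp only [fromRel_adj, hR, mul_pos_iff, sub_pos, sub_neg, dominates]
    tauto
  rw [this]
  exact isPerfect_and_not_hasOddHole_fromRel dominates

lemma abs_lt_abs_iff_mul_pos {β : Type*} [CommRing β] [LinearOrder β] [IsStrictOrderedRing β]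
    (a b : β) : |b| < |a| ↔ 0 < (a + b) * (a - b) := by
  rw [← sq_lt_sq, ← sub_pos]
  ring_nf

lemma hasOddAntihole_iff_hasOddHole_compl {V : Type*} (H : SimpleGraph V) :
    HasOddAntihole H ↔ HasOddHole Hᶜ := by
  refine exists_congr fun k => and_congr_right' <| and_congr_right' <|
    exists_congr fun f => forall₂_congr fun a b => ?_
  by_cases hab : a = b
  · simp [hab]
  · simp only [compl_adj, f.injective.ne_iff, hab, ne_eq, not_false_eq_true, true_and]
    tauto

lemma compl_fromRel_abs_lt_abs {V : Type*} (p : V → Fin 2 → ℝ)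
    (hp : ∀ v w : V, v ≠ w → |(p v - p w) 0| ≠ |(p v - p w) 1|) :
    (fromRel fun v w => |(p v - p w) 1| < |(p v - p w) 0|)ᶜ =
      fromRel fun v w => |(p v - p w) 0| < |(p v - p w) 1| := by
  ext v w
  simp only [compl_adj, fromRel_adj, Pi.sub_apply, abs_sub_comm (p w _), or_self]
  by_cases h : v = w
  · simp [h]
  · simp only [ne_eq, h, not_false_eq_true, true_and, not_lt]
    exact (hp v w h).le_iff_lt

/-- Let `V` be a finite set and `p : V → ℝ²` be such that for all distinct `v, w` the
vector `p v − p w` is nonzero with `|(p v − p w)₁| ≠ |(p v − p w)₂|`. Let `G₁` be the graph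
where distinct `v, w` are adjacent iff `|(p v − p w)₁| > |(p v − p w)₂|` and `G₂` the graph
where distinct `v, w` are adjacent iff `|(p v − p w)₂| > |(p v − p w)₁|` (the complement of
`G₁`). Then `G₁` and `G₂` are perfect; in particular both are odd-hole-free and
odd-antihole-free. -/
theorem monochrome_subgraphs_perfect {V : Type*} [Fintype V] (p : V → Fin 2 → ℝ)
    (hp : ∀ v w : V, v ≠ w → p v - p w ≠ 0 ∧ |(p v - p w) 0| ≠ |(p v - p w) 1|) :
    IsPerfect (SimpleGraph.fromRel fun v w => |(p v - p w) 1| < |(p v - p w) 0|) ∧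
    IsPerfect (SimpleGraph.fromRel fun v w => |(p v - p w) 0| < |(p v - p w) 1|) ∧
    ¬ HasOddHole (SimpleGraph.fromRel fun v w => |(p v - p w) 1| < |(p v - p w) 0|) ∧
    ¬ HasOddHole (SimpleGraph.fromRel fun v w => |(p v - p w) 0| < |(p v - p w) 1|) ∧
    ¬ HasOddAntihole (SimpleGraph.fromRel fun v w => |(p v - p w) 1| < |(p v - p w) 0|) ∧
    ¬ HasOddAntihole (SimpleGraph.fromRel fun v w => |(p v - p w) 0| < |(p v - p w) 1|) := by
  set G₁ := fromRel fun v w => |(p v - p w) 1| < |(p v - p w) 0|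
  set G₂ := fromRel fun v w => |(p v - p w) 0| < |(p v - p w) 1|
  obtain ⟨perfect₁, noHole₁⟩ : IsPerfect G₁ ∧ ¬ HasOddHole G₁ :=
    isPerfect_and_not_hasOddHole_fromRel_of_iff_mul_pos (fun v => p v 0 + p v 1)
      (fun v => p v 0 - p v 1) fun v w => by
        rw [abs_lt_abs_iff_mul_pos, Pi.sub_apply, Pi.sub_apply]; ring_nf
  obtain ⟨perfect₂, noHole₂⟩ : IsPerfect G₂ ∧ ¬ HasOddHole G₂ :=
    isPerfect_and_not_hasOddHole_fromRel_of_iff_mul_pos (fun v => p v 1 + p v 0)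
      (fun v => p v 1 - p v 0) fun v w => by
        rw [abs_lt_abs_iff_mul_pos, Pi.sub_apply, Pi.sub_apply]; ring_nf
  have hcompl : G₁ᶜ = G₂ := compl_fromRel_abs_lt_abs p fun v w h => (hp v w h).2
  refine ⟨perfect₁, perfect₂, noHole₁, noHole₂, ?_, ?_⟩
  · rwa [hasOddAntihole_iff_hasOddHole_compl, hcompl]
  · rwa [hasOddAntihole_iff_hasOddHole_compl, ← hcompl, compl_compl]
end

section
/- Let d ≥ 1, let G = (V,E) be a finite simple graph, and let p ∈ W(G, ℓ∞^d) with induced monochrome subgraphs G₁, …, G_d. Then: (i) L(G,p) = Σ_{i=1}^d L(G_i) ⊗ B_i, where B_i is the d×d matrix with (i,i)-entry 1 and all other entries 0, and ⊗ is the Kronecker product; (ii) L(G,p) is similar, via a permutation matrix, to the block diagonal matrix L(G₁) ⊕ ⋯ ⊕ L(G_d); (iii) λ_{d+1}(L(G,p)) = min_{i ∈ {1,…,d}} λ₂(L(G_i)). -/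
open scoped Classical
open Matrix

noncomputable section

/-- The list of eigenvalues (roots of the characteristic polynomial, with multiplicity)
of a real matrix, sorted in nondecreasing order. -/
def sortedEigs {m : Type*} [Fintype m] [DecidableEq m] (A : Matrix m m ℝ) : List ℝ :=
  A.charpoly.roots.sort (· ≤ ·)

/-- `eigval A j` is the `j`-th smallest eigenvalue `λ_j(A)` (1-based, with multiplicity). -/
def eigval {m : Type*} [Fintype m] [DecidableEq m] (A : Matrix m m ℝ) (j : ℕ) : ℝ :=
  (sortedEigs A).getD (j - 1) 0

variable {V : Type*} [Fintype V] [DecidableEq V]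

/-- `p` is an ℓ∞-framework position for `G` (i.e. `p ∈ W(G, ℓ∞^d)`): along each edge the
difference of the endpoints is nonzero and has a unique coordinate of maximal absolute
value. -/
def IsLinfPos {d : ℕ} (G : SimpleGraph V) (p : V → Fin d → ℝ) : Prop :=
  ∀ ⦃v w : V⦄, G.Adj v w → p v ≠ p w ∧
    ∃ i : Fin d, ∀ j : Fin d, j ≠ i → |p v j - p w j| < |p v i - p w i|

/-- The `i`-th monochrome subgraph of the framework `(G, p)` in `ℓ∞^d`: the spanning
subgraph of `G` whose edges are those on which the `i`-th coordinate of the difference of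
the endpoints has maximal absolute value. -/
def mono {d : ℕ} (G : SimpleGraph V) (p : V → Fin d → ℝ) (i : Fin d) : SimpleGraph V where
  Adj v w := G.Adj v w ∧ ∀ j : Fin d, |p v j - p w j| ≤ |p v i - p w i|
  symm := by
    constructor
    intro v w h
    refine ⟨h.1.symm, fun j => ?_⟩
    rw [abs_sub_comm (p w j), abs_sub_comm (p w i)]
    exact h.2 j
  loopless := ⟨fun v h => G.loopless.irrefl v h.1⟩

/-- The rigidity matrix `R(G,p)` of a framework in `ℓ∞^d`, with rows indexed by edges and
columns indexed by vertex-coordinate pairs: the row of an edge `vw ∈ E_i` has entry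
`sgn((p v − p w) i)` in column `(v, i)`, entry `−sgn((p v − p w) i) = sgn((p w − p v) i)`
in column `(w, i)`, and zeros elsewhere. -/
def rigidity {d : ℕ} (G : SimpleGraph V) (p : V → Fin d → ℝ) :
    Matrix G.edgeSet (V × Fin d) ℝ := fun e vi =>
  if h : vi.1 ∈ (e : Sym2 V) then
    if (mono G p vi.2).Adj vi.1 (Sym2.Mem.other h) then
      Real.sign (p vi.1 vi.2 - p (Sym2.Mem.other h) vi.2)
    else 0
  else 0

/-- The framework Laplacian `L(G,p) = R(G,p)ᵀ R(G,p)` of a framework in `ℓ∞^d`. -/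
def fLap {d : ℕ} (G : SimpleGraph V) (p : V → Fin d → ℝ) :
    Matrix (V × Fin d) (V × Fin d) ℝ :=
  (rigidity G p)ᵀ * rigidity G p

/-- The algebraic connectivity (Fiedler number) `a(H) = λ₂(L(H))` of a finite simple
graph. -/
def algConn (H : SimpleGraph V) : ℝ := eigval (H.lapMatrix ℝ) 2

/-- The algebraic connectivity of `G` in `ℓ∞^d`:
`a(G, ℓ∞^d) = sup { λ_{d+1}(L(G,p)) : p ∈ W(G, ℓ∞^d) }`. -/
def algConnLinf (d : ℕ) (G : SimpleGraph V) : ℝ :=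
  sSup {t : ℝ | ∃ p : V → Fin d → ℝ, IsLinfPos G p ∧ t = eigval (fLap G p) (d + 1)}

end

open Matrix
open scoped Kronecker

/-! Coloured by the unique maximal coordinate, each edge of `G` contributes to `R(G,p)` a row
supported in one coordinate block, where it is the oriented incidence vector `±(e_v - e_w)` of
that edge in the monochrome subgraph. Hence `R(G,p)ᵀ R(G,p)` is block diagonal in the ordering
`V × Fin d` (blocks indexed by the coordinate) with the blocks `L(G_i)`, and the permutation
in (ii) is the identity. The spectrum of `L(G,p)` is then the union of the spectra of the
`L(G_i)`; each is nonnegative and contains `0`, so `λ_{d+1}(L(G,p))` is found by counting the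
eigenvalues below and at `min_i λ₂(L(G_i))`. -/

namespace Multiset

variable {α : Type*} [LinearOrder α] {s : Multiset α} {q : α → Prop} [DecidablePred q] {j : ℕ}

theorem countP_le_of_not_sort_getElem (hq : Antitone q) (hj : j < (s.sort (· ≤ ·)).length)
    (h : ¬ q (s.sort (· ≤ ·))[j]) : s.countP q ≤ j := by
  set l := s.sort (· ≤ ·)
  have hl : l.SortedLE := (pairwise_sort s _).sortedLE
  have hdrop : (l.drop j).countP (fun a => decide (q a)) = 0 := by
    refine List.countP_eq_zero.mpr fun a ha hqa => h (hq ?_ (of_decide_eq_true hqa))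
    obtain ⟨k, hk, rfl⟩ := List.getElem_of_mem ha
    rw [List.getElem_drop]
    exact hl.getElem_le_getElem_of_le (Nat.le_add_right j k)
  calc s.countP q = l.countP (fun a => decide (q a)) := by rw [← coe_countP, sort_eq]
    _ = (l.take j).countP (fun a => decide (q a)) := by
      rw [← List.take_append_drop j l, List.countP_append, List.take_append_drop, hdrop,
        add_zero]
    _ ≤ j := List.countP_le_length.trans (List.length_take_le j l)

theorem lt_countP_of_sort_getElem (hq : Antitone q) (hj : j < (s.sort (· ≤ ·)).length)
    (h : q (s.sort (· ≤ ·))[j]) : j < s.countP q := by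
  set l := s.sort (· ≤ ·)
  have hl : l.SortedLE := (pairwise_sort s _).sortedLE
  have htake : (l.take (j + 1)).countP (fun a => decide (q a)) = j + 1 := by
    rw [List.countP_eq_length.mpr, List.length_take_of_le hj]
    intro a ha
    obtain ⟨k, hk, rfl⟩ := List.getElem_of_mem ha
    rw [List.getElem_take]
    rw [List.length_take_of_le hj] at hk
    exact decide_eq_true (hq (hl.getElem_le_getElem_of_le (Nat.le_of_lt_succ hk)) h)
  calc j < (l.take (j + 1)).countP (fun a => decide (q a)) := by omega
    _ ≤ l.countP (fun a => decide (q a)) := (List.take_sublist _ _).countP_le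
    _ = s.countP q := by rw [← coe_countP, sort_eq]

theorem sort_getD_eq_of_countP {x y : α} (hlt : s.countP (· < x) ≤ j)
    (hle : j < s.countP (· ≤ x)) : (s.sort (· ≤ ·)).getD j y = x := by
  have hj : j < (s.sort (· ≤ ·)).length := by
    rw [length_sort]; exact hle.trans_le (countP_le_card _ _)
  rw [List.getD_eq_getElem _ _ hj]
  refine le_antisymm (not_lt.mp fun hgt => ?_) (not_lt.mp fun hlt' => ?_)
  · exact (countP_le_of_not_sort_getElem (fun _ _ hab hb => hab.trans hb) hj
      hgt.not_ge).not_gt hle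
  · exact (lt_countP_of_sort_getElem (fun _ _ hab hb => hab.trans_lt hb) hj hlt').not_ge hlt

theorem countP_bind {ι α : Type*} (s : Multiset ι) (f : ι → Multiset α) (p : α → Prop)
    [DecidablePred p] : (s.bind f).countP p = (s.map fun i => (f i).countP p).sum := by
  simp only [countP_eq_card_filter, filter_bind, card_bind, Function.comp_def]

theorem sort_bind_getD_card_eq_iInf {ι : Type*} [Fintype ι] (s : ι → Multiset ℝ) {n : ℕ}
    (hcard : ∀ i, card (s i) = n) (hnonneg : ∀ i, ∀ x ∈ s i, 0 ≤ x) (hzero : ∀ i, 0 ∈ s i) :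
    ((Finset.univ.val.bind s).sort (· ≤ ·)).getD (Fintype.card ι) 0 =
      ⨅ i, ((s i).sort (· ≤ ·)).getD 1 0 := by
  rcases isEmpty_or_nonempty ι with hι | hι
  · simp
  have hlen : ∀ i, ((s i).sort (· ≤ ·)).length = n := fun i => by rw [length_sort, hcard]
  rcases le_or_gt n 1 with hn | hn
  · have hsmall : ∀ i, ((s i).sort (· ≤ ·)).getD 1 0 = 0 := fun i =>
      List.getD_eq_default _ _ (by rw [hlen]; exact hn)
    simp only [hsmall, ciInf_const]
    refine List.getD_eq_default _ _ ?_
    rw [length_sort, card_bind]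
    simp only [Function.comp_def, hcard, map_const', sum_replicate, smul_eq_mul]
    simpa using Nat.mul_le_mul_left (Fintype.card ι) hn
  have hidx : ∀ i, 1 < ((s i).sort (· ≤ ·)).length := fun i => by rw [hlen]; exact hn
  set a : ι → ℝ := fun i => ((s i).sort (· ≤ ·)).getD 1 0
  have ha : ∀ i, a i = ((s i).sort (· ≤ ·))[1]'(hidx i) := fun i =>
    List.getD_eq_getElem _ _ (hidx i)
  obtain ⟨i₀, hi₀⟩ := Finite.exists_min a
  have hinf : ⨅ i, a i = a i₀ :=
    le_antisymm (ciInf_le (Finite.bddBelow_range a) i₀) (le_ciInf hi₀)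
  have ha₀ : 0 ≤ a i₀ := hnonneg i₀ _ ((mem_sort _).mp (ha i₀ ▸ List.getElem_mem _))
  rw [hinf]
  -- Every block has at most one eigenvalue below `a i₀` and at least one at most `a i₀`
  -- (its `0`); block `i₀` has two.
  apply sort_getD_eq_of_countP
  · rw [countP_bind]
    calc (Finset.univ.val.map fun i => (s i).countP (· < a i₀)).sum
        ≤ ∑ _i : ι, 1 := Finset.sum_le_sum fun i _ =>
          countP_le_of_not_sort_getElem (fun _ _ hxy hy => hxy.trans_lt hy) (hidx i)
            (by rw [← ha]; exact not_lt.mpr (hi₀ i))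
      _ = Fintype.card ι := by simp
  · rw [countP_bind]
    calc Fintype.card ι = ∑ _i : ι, 1 := by simp
      _ < (Finset.univ.val.map fun i => (s i).countP (· ≤ a i₀)).sum :=
        Finset.sum_lt_sum
          (fun i _ => card_pos_iff_exists_mem.mpr ⟨0, mem_filter.mpr ⟨hzero i, ha₀⟩⟩ |>.trans_eq
            (countP_eq_card_filter _ _).symm)
          ⟨i₀, Finset.mem_univ _, lt_countP_of_sort_getElem (fun _ _ hxy hy => hxy.trans hy)
            (hidx i₀) (ha i₀ ▸ le_rfl)⟩

end Multiset

namespace Matrix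

open Polynomial

variable {n o R : Type*} [Fintype n] [DecidableEq n] [Fintype o] [DecidableEq o] [CommRing R]

theorem charmatrix_blockDiagonal (M : o → Matrix n n R) :
    charmatrix (blockDiagonal M) = blockDiagonal fun i => charmatrix (M i) := by
  ext ⟨v, i⟩ ⟨w, j⟩
  by_cases hij : i = j <;> by_cases hvw : v = w <;> simp [blockDiagonal_apply, hij, hvw]

theorem charpoly_blockDiagonal (M : o → Matrix n n R) :
    (blockDiagonal M).charpoly = ∏ i, (M i).charpoly := by
  rw [charpoly, charmatrix_blockDiagonal, det_blockDiagonal]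
  rfl

theorem roots_charpoly_blockDiagonal {K : Type*} [Field K] (M : o → Matrix n n K) :
    (blockDiagonal M).charpoly.roots = Finset.univ.val.bind fun i => (M i).charpoly.roots := by
  rw [charpoly_blockDiagonal]
  exact roots_prod _ _ (Finset.prod_ne_zero_iff.mpr fun i _ => (charpoly_monic _).ne_zero)

theorem blockDiagonal_eq_sum_kronecker_single {l m α : Type*} [NonAssocSemiring α]
    (M : o → Matrix l m α) :
    blockDiagonal M = ∑ i, M i ⊗ₖ single i i (1 : α) := by
  ext ⟨v, a⟩ ⟨w, b⟩
  simp [blockDiagonal_apply, sum_apply, single_apply, ite_and]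

end Matrix

namespace SimpleGraph

variable {V : Type*} [Fintype V] [DecidableEq V] (H : SimpleGraph V) [DecidableRel H.Adj]

theorem card_roots_charpoly_lapMatrix :
    Multiset.card (H.lapMatrix ℝ).charpoly.roots = Fintype.card V := by
  simp [(H.isHermitian_lapMatrix ℝ).roots_charpoly_eq_eigenvalues]

theorem nonneg_of_mem_roots_charpoly_lapMatrix {x : ℝ}
    (hx : x ∈ (H.lapMatrix ℝ).charpoly.roots) : 0 ≤ x := by
  rw [(H.isHermitian_lapMatrix ℝ).roots_charpoly_eq_eigenvalues] at hx
  obtain ⟨i, -, rfl⟩ := Multiset.mem_map.mp hx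
  exact (H.posSemidef_lapMatrix ℝ).eigenvalues_nonneg i

theorem zero_mem_roots_charpoly_lapMatrix [Nonempty V] :
    (0 : ℝ) ∈ (H.lapMatrix ℝ).charpoly.roots := by
  rw [Polynomial.mem_roots (Matrix.charpoly_monic _).ne_zero,
    ← Matrix.mem_spectrum_iff_isRoot_charpoly, spectrum.zero_mem_iff,
    Matrix.isUnit_iff_isUnit_det, det_lapMatrix_eq_zero]
  exact not_isUnit_zero

theorem sum_edgeSet_ite_mem_incidenceSet {G : SimpleGraph V} [Fintype G.edgeSet] (hHG : H ≤ G)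
    (v : V) :
    ∑ e : G.edgeSet, (if (e : Sym2 V) ∈ H.incidenceSet v then (1 : ℝ) else 0) = H.degree v := by
  rw [Finset.sum_boole, ← Fintype.card_subtype, ← H.card_incidenceSet_eq_degree]
  exact_mod_cast Fintype.card_congr
    (Equiv.subtypeSubtypeEquivSubtype fun {e} (h : e ∈ H.incidenceSet v) => edgeSet_mono hHG h.1)

end SimpleGraph

theorem eigval_blockDiagonal_lapMatrix {V ι : Type*} [Fintype V] [DecidableEq V] [Fintype ι]
    [DecidableEq ι] (H : ι → SimpleGraph V) [∀ i, DecidableRel (H i).Adj] :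
    eigval (blockDiagonal fun i => (H i).lapMatrix ℝ) (Fintype.card ι + 1) =
      ⨅ i, eigval ((H i).lapMatrix ℝ) 2 := by
  rcases isEmpty_or_nonempty V with hV | hV
  · simp [eigval, sortedEigs, Matrix.charpoly]
  rw [eigval, sortedEigs, Matrix.roots_charpoly_blockDiagonal, Nat.add_sub_cancel]
  exact Multiset.sort_bind_getD_card_eq_iInf _ (fun i => (H i).card_roots_charpoly_lapMatrix)
    (fun i _ => (H i).nonneg_of_mem_roots_charpoly_lapMatrix)
    (fun i => (H i).zero_mem_roots_charpoly_lapMatrix)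

theorem Real.sign_mul_self_of_ne_zero {x : ℝ} (hx : x ≠ 0) : Real.sign x * Real.sign x = 1 := by
  rcases Real.sign_apply_eq_of_ne_zero x hx with h | h <;> norm_num [h]

section Framework

variable {V : Type*} {d : ℕ} {G : SimpleGraph V}
  {p : V → Fin d → ℝ} {v w : V} {a b : Fin d}

theorem mono_le (i : Fin d) : mono G p i ≤ G := fun _ _ h => h.1

theorem IsLinfPos.sub_ne_zero_of_mono_adj (hp : IsLinfPos G p) (h : (mono G p a).Adj v w) :
    p v a - p w a ≠ 0 := by
  intro h0
  refine (hp h.1).1 (funext fun j => sub_eq_zero.mp (abs_nonpos_iff.mp ?_))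
  simpa [h0] using h.2 j

theorem IsLinfPos.eq_of_mono_adj (hp : IsLinfPos G p) (ha : (mono G p a).Adj v w)
    (hb : (mono G p b).Adj v w) : a = b := by
  obtain ⟨-, i, hi⟩ := hp ha.1
  have hmax : ∀ c, (mono G p c).Adj v w → c = i := fun c hc =>
    by_contra fun hci => (hi c hci).not_ge (hc.2 i)
  rw [hmax a ha, hmax b hb]

theorem IsLinfPos.eq_of_mem_edgeSet_mono (hp : IsLinfPos G p) {e : Sym2 V}
    (ha : e ∈ (mono G p a).edgeSet) (hb : e ∈ (mono G p b).edgeSet) : a = b := by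
  induction e using Sym2.ind with
  | h x y => exact hp.eq_of_mono_adj ha hb

variable [DecidableEq V]

theorem rigidity_apply_of_notMem {e : G.edgeSet} (h : v ∉ (e : Sym2 V)) :
    rigidity G p e (v, a) = 0 :=
  dif_neg h

theorem rigidity_apply_of_eq {e : G.edgeSet} (he : (e : Sym2 V) = s(v, w)) :
    rigidity G p e (v, a) = if (mono G p a).Adj v w then Real.sign (p v a - p w a) else 0 := by
  have hv : v ∈ (e : Sym2 V) := he ▸ Sym2.mem_mk_left v w
  have hw : Sym2.Mem.other hv = w := Sym2.congr_right.mp ((Sym2.other_spec hv).trans he)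
  rw [rigidity, dif_pos hv, hw]

theorem mem_of_rigidity_ne_zero {e : G.edgeSet} (h : rigidity G p e (v, a) ≠ 0) :
    v ∈ (e : Sym2 V) :=
  not_not.mp fun hv => h (rigidity_apply_of_notMem hv)

theorem mem_edgeSet_mono_of_rigidity_ne_zero {e : G.edgeSet}
    (h : rigidity G p e (v, a) ≠ 0) : (e : Sym2 V) ∈ (mono G p a).edgeSet := by
  obtain ⟨w, he⟩ := Sym2.mem_iff_exists.mp (mem_of_rigidity_ne_zero h)
  rw [rigidity_apply_of_eq he] at h
  rw [he]
  by_contra hadj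
  exact h (if_neg hadj)

theorem IsLinfPos.rigidity_mul_rigidity_of_coord_ne (hp : IsLinfPos G p) (e : G.edgeSet)
    (hab : a ≠ b) : rigidity G p e (v, a) * rigidity G p e (w, b) = 0 := by
  by_contra h
  obtain ⟨ha, hb⟩ := mul_ne_zero_iff.mp h
  exact hab (hp.eq_of_mem_edgeSet_mono (mem_edgeSet_mono_of_rigidity_ne_zero ha)
    (mem_edgeSet_mono_of_rigidity_ne_zero hb))

theorem IsLinfPos.rigidity_mul_self (hp : IsLinfPos G p) (e : G.edgeSet) :
    rigidity G p e (v, a) * rigidity G p e (v, a) =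
      if (e : Sym2 V) ∈ (mono G p a).incidenceSet v then 1 else 0 := by
  by_cases hv : v ∈ (e : Sym2 V)
  · obtain ⟨w, he⟩ := Sym2.mem_iff_exists.mp hv
    simp only [rigidity_apply_of_eq he, SimpleGraph.incidenceSet, Set.mem_ofPred_eq, he,
      SimpleGraph.mem_edgeSet, Sym2.mem_mk_left, and_true]
    split_ifs with hadj
    · exact Real.sign_mul_self_of_ne_zero (hp.sub_ne_zero_of_mono_adj hadj)
    · exact zero_mul 0
  · rw [rigidity_apply_of_notMem hv, zero_mul, if_neg fun h => hv h.2]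

theorem IsLinfPos.rigidity_mul_rigidity_of_vertex_ne (hp : IsLinfPos G p) (e : G.edgeSet)
    (hvw : v ≠ w) : rigidity G p e (v, a) * rigidity G p e (w, a) =
      if (e : Sym2 V) = s(v, w) ∧ (mono G p a).Adj v w then -1 else 0 := by
  by_cases he : (e : Sym2 V) = s(v, w)
  · rw [rigidity_apply_of_eq he, rigidity_apply_of_eq (he.trans Sym2.eq_swap)]
    simp only [he, true_and, (mono G p a).adj_comm w v]
    split_ifs with hadj
    · rw [← neg_sub (p v a), Real.sign_neg, mul_neg,
        Real.sign_mul_self_of_ne_zero (hp.sub_ne_zero_of_mono_adj hadj)]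
    · exact zero_mul 0
  · rw [if_neg fun h => he h.1]
    by_contra h
    obtain ⟨hv, hw⟩ := mul_ne_zero_iff.mp h
    exact he (Sym2.eq_of_ne_mem hvw (mem_of_rigidity_ne_zero hv) (mem_of_rigidity_ne_zero hw)
      (Sym2.mem_mk_left v w) (Sym2.mem_mk_right v w))

variable [Fintype V]

theorem IsLinfPos.fLap_eq_blockDiagonal (hp : IsLinfPos G p) :
    fLap G p = blockDiagonal fun a => (mono G p a).lapMatrix ℝ := by
  ext ⟨v, a⟩ ⟨w, b⟩
  simp only [fLap, mul_apply, transpose_apply, blockDiagonal_apply]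
  rcases eq_or_ne a b with rfl | hab
  · rw [if_pos rfl]
    rcases eq_or_ne v w with rfl | hvw
    · simp only [hp.rigidity_mul_self, (mono G p a).sum_edgeSet_ite_mem_incidenceSet (mono_le a)]
      simp [SimpleGraph.lapMatrix, SimpleGraph.degMatrix]
    · simp only [hp.rigidity_mul_rigidity_of_vertex_ne _ hvw]
      by_cases hadj : (mono G p a).Adj v w
      · have hG : s(v, w) ∈ G.edgeSet := mono_le a hadj
        simp only [hadj, and_true]
        rw [Fintype.sum_eq_single ⟨_, hG⟩ fun e he => if_neg fun h => he (Subtype.ext h),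
          if_pos rfl]
        simp [SimpleGraph.lapMatrix, SimpleGraph.degMatrix, hvw, hadj]
      · simp [SimpleGraph.lapMatrix, SimpleGraph.degMatrix, hvw, hadj]
  · rw [if_neg hab]
    exact Finset.sum_eq_zero fun e _ => hp.rigidity_mul_rigidity_of_coord_ne e hab

end Framework

theorem fLap_structure_general {V : Type*} [Fintype V] [DecidableEq V] {d : ℕ}
    (G : SimpleGraph V) (p : V → Fin d → ℝ) (hp : IsLinfPos G p) :
    fLap G p =
      ∑ i : Fin d, ((mono G p i).lapMatrix ℝ) ⊗ₖ (Matrix.single i i (1 : ℝ)) ∧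
    (∃ σ : Equiv.Perm (V × Fin d),
      fLap G p =
        (Matrix.blockDiagonal fun i : Fin d => (mono G p i).lapMatrix ℝ).submatrix σ σ) ∧
    eigval (fLap G p) (d + 1) = ⨅ i : Fin d, eigval ((mono G p i).lapMatrix ℝ) 2 := by
  have hblock := hp.fLap_eq_blockDiagonal
  refine ⟨hblock.trans (blockDiagonal_eq_sum_kronecker_single _), ⟨Equiv.refl _, ?_⟩, ?_⟩
  · rw [hblock, Equiv.coe_refl, submatrix_id_id]
  · simpa [hblock] using eigval_blockDiagonal_lapMatrix (mono G p)

/-- Structure of the framework Laplacian in `ℓ∞^d`: for `p ∈ W(G, ℓ∞^d)` with monochrome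
subgraphs `G₁, …, G_d`, (i) `L(G,p) = Σᵢ L(Gᵢ) ⊗ Bᵢ` where `Bᵢ` is the matrix unit with
`(i,i)`-entry `1`; (ii) `L(G,p)` is permutation-similar to the block diagonal matrix
`L(G₁) ⊕ ⋯ ⊕ L(G_d)`; (iii) `λ_{d+1}(L(G,p)) = min_{i} λ₂(L(Gᵢ))`. -/
theorem fLap_structure {V : Type*} [Fintype V] [DecidableEq V] {d : ℕ} (hd : 1 ≤ d)
    (G : SimpleGraph V) (p : V → Fin d → ℝ) (hp : IsLinfPos G p) :
    fLap G p =
      ∑ i : Fin d, ((mono G p i).lapMatrix ℝ) ⊗ₖ (Matrix.single i i (1 : ℝ)) ∧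
    (∃ σ : Equiv.Perm (V × Fin d),
      fLap G p =
        (Matrix.blockDiagonal fun i : Fin d => (mono G p i).lapMatrix ℝ).submatrix σ σ) ∧
    eigval (fLap G p) (d + 1) = ⨅ i : Fin d, eigval ((mono G p i).lapMatrix ℝ) 2 :=
  fLap_structure_general G p hp
end

section
/- Let n ≥ 2 and d ≥ 1, and let M be a symmetric positive semidefinite real dn × dn matrix with rows and columns indexed by {1,…,d} × {1,…,n}. Suppose M z_i = 0 for each i ∈ {1,…,d}, where z_i ∈ ℝ^{dn} is the 0–1 vector whose entries equal 1 exactly on the indices {i} × {1,…,n}. Then λ_{d+1}(M) ≤ (n/(n−1)) · min over all diagonal entries of M. -/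
noncomputable section

/-!
Courant–Fischer: if the Rayleigh quotient of a symmetric matrix is at most `c` on a subspace of
dimension `k`, then at least `k` of its eigenvalues are `≤ c`, since the subspace meets the span
of the eigenvectors with eigenvalues `> c` only in `0`. Here the subspace is spanned by the block
indicators `zᵢ`, which lie in the kernel, and by `v = e_q - z_{q.1} / n`, which is orthogonal to
them. For `x = ∑ aᵢ zᵢ + t v` one gets `xᵀ M x = t² M_qq` and `|x|² ≥ t² |v|² = t² (1 - 1/n)`,
so the Rayleigh quotient is at most `n / (n - 1) · M_qq`; then take `q` minimising the diagonal.
-/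

open Matrix Module Finset

theorem List.getD_le_of_lt_countP {α : Type*} [LinearOrder α] {L : List α}
    (hL : L.Pairwise (· ≤ ·)) {c : α} {k : ℕ} (hk : k < L.countP (· ≤ c)) (x₀ : α) :
    L.getD k x₀ ≤ c := by
  induction L generalizing k with
  | nil => simp at hk
  | cons x L ih =>
    cases k with
    | zero =>
      obtain ⟨y, hy, hyc⟩ := List.countP_pos_iff.mp (Nat.zero_lt_of_lt hk)
      simp only [List.getD_cons_zero]
      rcases List.mem_cons.mp hy with rfl | hy
      · simpa using hyc
      · exact (List.rel_of_pairwise_cons hL hy).trans (by simpa using hyc)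
    | succ k =>
      rw [List.countP_cons] at hk
      exact ih hL.of_cons (by split_ifs at hk <;> omega)

namespace Matrix

theorem dotProduct_mulVec_eq_star_mulVec_dotProduct {m : Type*} [Fintype m] (U : Matrix m m ℝ)
    (x w : m → ℝ) :
    x ⬝ᵥ (U *ᵥ w) = (star U *ᵥ x) ⬝ᵥ w := by
  rw [dotProduct_mulVec, star_eq_conjTranspose, conjTranspose_eq_transpose_of_trivial,
    mulVec_transpose]

end Matrix

namespace Matrix.IsHermitian

variable {m : Type*} [Fintype m] [DecidableEq m] {A : Matrix m m ℝ}

theorem dotProduct_self_eq_sum_sq (hA : A.IsHermitian) (x : m → ℝ) :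
    x ⬝ᵥ x = ∑ j, (star (hA.eigenvectorUnitary : Matrix m m ℝ) *ᵥ x) j ^ 2 := by
  set U := hA.eigenvectorUnitary
  calc x ⬝ᵥ x = x ⬝ᵥ ((U : Matrix m m ℝ) *ᵥ (star (U : Matrix m m ℝ) *ᵥ x)) := by
        rw [mulVec_mulVec, Unitary.mul_star_self_of_mem U.2, one_mulVec]
    _ = _ := by rw [dotProduct_mulVec_eq_star_mulVec_dotProduct]; simp only [dotProduct, sq]

theorem dotProduct_mulVec_eq_sum_eigenvalues (hA : A.IsHermitian) (x : m → ℝ) :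
    x ⬝ᵥ (A *ᵥ x) =
      ∑ j, hA.eigenvalues j * (star (hA.eigenvectorUnitary : Matrix m m ℝ) *ᵥ x) j ^ 2 := by
  conv_lhs => rw [hA.spectral_theorem, Unitary.conjStarAlgAut_apply, ← mulVec_mulVec,
    ← mulVec_mulVec, dotProduct_mulVec_eq_star_mulVec_dotProduct]
  simp only [dotProduct, mulVec_diagonal, Function.comp_apply, RCLike.ofReal_real_eq_id, id]
  congr 1; ext j; ring

theorem mul_dotProduct_self_lt_dotProduct_mulVec (hA : A.IsHermitian) {c : ℝ} {x : m → ℝ}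
    (hx : x ≠ 0)
    (hxc : ∀ j, hA.eigenvalues j ≤ c → (star (hA.eigenvectorUnitary : Matrix m m ℝ) *ᵥ x) j = 0) :
    c * (x ⬝ᵥ x) < x ⬝ᵥ (A *ᵥ x) := by
  rw [← sub_pos, hA.dotProduct_mulVec_eq_sum_eigenvalues, hA.dotProduct_self_eq_sum_sq,
    Finset.mul_sum, ← Finset.sum_sub_distrib]
  set y := star (hA.eigenvectorUnitary : Matrix m m ℝ) *ᵥ x
  have hy : y ≠ 0 := by
    contrapose! hx
    rw [← one_mulVec x, ← Unitary.mul_star_self_of_mem hA.eigenvectorUnitary.2, ← mulVec_mulVec]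
    change _ *ᵥ y = 0
    rw [hx, mulVec_zero]
  obtain ⟨j, hj⟩ := Function.ne_iff.mp hy
  have hjc : c < hA.eigenvalues j := lt_of_not_ge fun h => hj (hxc j h)
  refine Finset.sum_pos' (fun i _ => ?_) ⟨j, Finset.mem_univ j, ?_⟩
  · by_cases hi : hA.eigenvalues i ≤ c
    · simp [hxc i hi]
    · nlinarith [sq_nonneg (y i)]
  · nlinarith [sq_pos_of_ne_zero hj]

theorem finrank_le_card_eigenvalues_le (hA : A.IsHermitian) (W : Submodule ℝ (m → ℝ)) {c : ℝ}
    (hW : ∀ x ∈ W, x ⬝ᵥ (A *ᵥ x) ≤ c * (x ⬝ᵥ x)) :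
    finrank ℝ W ≤ #{j | hA.eigenvalues j ≤ c} := by
  set K : Finset m := {j | hA.eigenvalues j ≤ c}
  let f : W →ₗ[ℝ] (K → ℝ) := LinearMap.funLeft ℝ ℝ ((↑) : K → m) ∘ₗ
    (star (hA.eigenvectorUnitary : Matrix m m ℝ)).mulVecLin ∘ₗ W.subtype
  by_contra! hlt
  rw [← Fintype.card_coe K, ← Module.finrank_fintype_fun_eq_card ℝ] at hlt
  obtain ⟨⟨x, hxW⟩, hxf, hx0⟩ :=
    (Submodule.ne_bot_iff _).mp (LinearMap.ker_ne_bot_of_finrank_lt (f := f) hlt)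
  have hxc : ∀ j, hA.eigenvalues j ≤ c →
      (star (hA.eigenvectorUnitary : Matrix m m ℝ) *ᵥ x) j = 0 := fun j hj =>
    congrFun hxf ⟨j, by simpa [K] using hj⟩
  exact (hW x hxW).not_gt
    (hA.mul_dotProduct_self_lt_dotProduct_mulVec (by simpa using hx0) hxc)

theorem eigval_le_of_le_card (hA : A.IsHermitian) {c : ℝ} {k : ℕ} (hk : 1 ≤ k)
    (hkc : k ≤ #{j | hA.eigenvalues j ≤ c}) : eigval A k ≤ c := by
  refine List.getD_le_of_lt_countP (Multiset.pairwise_sort _ _) ?_ 0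
  rw [← Multiset.coe_countP, Multiset.sort_eq, hA.roots_charpoly_eq_eigenvalues,
    Multiset.countP_map]
  simp only [Function.comp_apply, RCLike.ofReal_real_eq_id, id]
  rw [← Finset.filter_val, Finset.card_val]
  omega

end Matrix.IsHermitian

section BlockKernel

variable {ι κ : Type*} [Fintype ι] [Fintype κ] {M : Matrix (ι × κ) (ι × κ) ℝ}

theorem mulVec_comp_fst_eq_zero [DecidableEq ι]
    (hz : ∀ i, M *ᵥ (fun q : ι × κ => if q.1 = i then (1 : ℝ) else 0) = 0) (a : ι → ℝ) :
    M *ᵥ (a ∘ Prod.fst) = 0 := by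
  have ha : a ∘ Prod.fst = ∑ i, a i • fun q : ι × κ => if q.1 = i then (1 : ℝ) else 0 := by
    ext q
    simp
  simp [ha, mulVec_sum, mulVec_smul, hz]

theorem comp_fst_dotProduct_eq_zero {v : ι × κ → ℝ} (hv : ∀ i, ∑ j, v (i, j) = 0) (a : ι → ℝ) :
    (a ∘ Prod.fst) ⬝ᵥ v = 0 := by
  simp [dotProduct, Fintype.sum_prod_type, ← Finset.mul_sum, hv]

theorem dotProduct_self_comp_fst_add_smul {v : ι × κ → ℝ} (hv : ∀ i, ∑ j, v (i, j) = 0)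
    (a : ι → ℝ) (t : ℝ) :
    (a ∘ Prod.fst + t • v) ⬝ᵥ (a ∘ Prod.fst + t • v) =
      (a ∘ Prod.fst : ι × κ → ℝ) ⬝ᵥ (a ∘ Prod.fst) + t ^ 2 * (v ⬝ᵥ v) := by
  have h := comp_fst_dotProduct_eq_zero hv a
  rw [dotProduct_comm] at h
  simp only [add_dotProduct, dotProduct_add, smul_dotProduct, dotProduct_smul,
    comp_fst_dotProduct_eq_zero hv, h, smul_eq_mul]
  ring

theorem dotProduct_mulVec_comp_fst_add_smul (hM : M.IsHermitian)
    (hker : ∀ a : ι → ℝ, M *ᵥ (a ∘ Prod.fst) = 0) (a : ι → ℝ) (t : ℝ) (v : ι × κ → ℝ) :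
    (a ∘ Prod.fst + t • v) ⬝ᵥ (M *ᵥ (a ∘ Prod.fst + t • v)) = t ^ 2 * (v ⬝ᵥ (M *ᵥ v)) := by
  have hMx : M *ᵥ (a ∘ Prod.fst + t • v) = t • (M *ᵥ v) := by
    rw [mulVec_add, mulVec_smul, hker, zero_add]
  rw [hMx, dotProduct_smul, dotProduct_mulVec_eq_star_mulVec_dotProduct, hM.star_eq, hMx,
    smul_dotProduct, dotProduct_comm (M *ᵥ v), smul_eq_mul, smul_eq_mul]
  ring

theorem eigval_card_add_one_le_div [DecidableEq ι] [DecidableEq κ] (hM : M.PosSemidef)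
    (hker : ∀ a : ι → ℝ, M *ᵥ (a ∘ Prod.fst) = 0) {v : ι × κ → ℝ} (hv0 : v ≠ 0)
    (hv : ∀ i, ∑ j, v (i, j) = 0) :
    eigval M (Fintype.card ι + 1) ≤ v ⬝ᵥ (M *ᵥ v) / (v ⬝ᵥ v) := by
  have hvv : 0 < v ⬝ᵥ v :=
    lt_of_le_of_ne (by simpa using dotProduct_star_self_nonneg v) (by simpa [eq_comm] using hv0)
  have hρ : 0 ≤ v ⬝ᵥ (M *ᵥ v) / (v ⬝ᵥ v) :=
    div_nonneg (by simpa using hM.dotProduct_mulVec_nonneg v) hvv.le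
  let L := (LinearMap.funLeft ℝ ℝ (Prod.fst : ι × κ → ι)).coprod (LinearMap.toSpanSingleton ℝ _ v)
  have hL : ∀ p, L p = p.1 ∘ Prod.fst + p.2 • v := fun _ => rfl
  have hLinj : Function.Injective L := by
    rw [← LinearMap.ker_eq_bot, LinearMap.ker_eq_bot']
    rintro ⟨a, t⟩ h0
    rw [hL] at h0
    have ht : t = 0 := by
      have := congrArg (· ⬝ᵥ v) h0
      simp only [add_dotProduct, smul_dotProduct, comp_fst_dotProduct_eq_zero hv, zero_dotProduct,
        smul_eq_mul, zero_add] at this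
      exact (mul_eq_zero.mp this).resolve_right hvv.ne'
    obtain ⟨⟨_, j⟩, -⟩ := Function.ne_iff.mp hv0
    have ha : a = 0 := funext fun i => by simpa [ht] using congrFun h0 (i, j)
    simp [ha, ht]
  have hW : ∀ x ∈ LinearMap.range L, x ⬝ᵥ (M *ᵥ x) ≤ v ⬝ᵥ (M *ᵥ v) / (v ⬝ᵥ v) * (x ⬝ᵥ x) := by
    rintro _ ⟨⟨a, t⟩, rfl⟩
    rw [hL, dotProduct_mulVec_comp_fst_add_smul hM.1 hker, dotProduct_self_comp_fst_add_smul hv]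
    have ha : 0 ≤ (a ∘ Prod.fst : ι × κ → ℝ) ⬝ᵥ (a ∘ Prod.fst) := by
      simpa using dotProduct_star_self_nonneg (a ∘ Prod.fst : ι × κ → ℝ)
    calc t ^ 2 * (v ⬝ᵥ (M *ᵥ v)) = v ⬝ᵥ (M *ᵥ v) / (v ⬝ᵥ v) * (t ^ 2 * (v ⬝ᵥ v)) := by
          field_simp
      _ ≤ _ := by gcongr; exact le_add_of_nonneg_left ha
  have hk := hM.1.finrank_le_card_eigenvalues_le _ hW
  rw [LinearMap.finrank_range_of_inj hLinj, finrank_prod, finrank_fintype_fun_eq_card,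
    finrank_self] at hk
  exact hM.1.eigval_le_of_le_card (by omega) hk

theorem eigval_card_add_one_le_mul_diag [DecidableEq ι] [DecidableEq κ] [Nontrivial κ]
    (hM : M.PosSemidef) (hker : ∀ a : ι → ℝ, M *ᵥ (a ∘ Prod.fst) = 0) (q : ι × κ) :
    eigval M (Fintype.card ι + 1) ≤ (Fintype.card κ / (Fintype.card κ - 1) : ℝ) * M q q := by
  set n : ℝ := (Fintype.card κ : ℝ)
  have hn : 1 < n := Nat.one_lt_cast.mpr Fintype.one_lt_card
  set e : ι × κ → ℝ := Pi.single q 1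
  set v : ι × κ → ℝ := e - Pi.single q.1 n⁻¹ ∘ Prod.fst
  have hv : ∀ i, ∑ j, v (i, j) = 0 := by
    intro i
    by_cases hi : i = q.1
    · subst hi
      simp [v, e, Finset.sum_sub_distrib, Pi.single_apply, Prod.ext_iff, n]
    · simp [v, e, Prod.ext_iff, hi]
  have hMv : M *ᵥ v = M *ᵥ e := by rw [mulVec_sub, hker, sub_zero]
  have hvMv : v ⬝ᵥ (M *ᵥ v) = M q q := by
    rw [hMv, dotProduct_mulVec_eq_star_mulVec_dotProduct, hM.1.star_eq, hMv]
    simp [e, mulVec_single]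
  have hvv : v ⬝ᵥ v = 1 - n⁻¹ := by
    rw [dotProduct_sub v e, dotProduct_comm v (_ ∘ _), comp_fst_dotProduct_eq_zero hv]
    simp [v, e]
  have hv0 : v ≠ 0 := by
    intro h
    rw [h, zero_dotProduct] at hvv
    linarith [inv_lt_one_of_one_lt₀ hn]
  calc eigval M (Fintype.card ι + 1) ≤ v ⬝ᵥ (M *ᵥ v) / (v ⬝ᵥ v) :=
        eigval_card_add_one_le_div hM hker hv0 hv
    _ = n / (n - 1) * M q q := by
        rw [hvMv, hvv]
        field_simp

end BlockKernel

/-- Let `n ≥ 2`, `d ≥ 1` and let `M` be a symmetric positive semidefinite real `dn × dn`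
matrix indexed by `{1,…,d} × {1,…,n}` with `M zᵢ = 0` for each `i`, where `zᵢ` is the 0–1
vector supported exactly on `{i} × {1,…,n}`. Then
`λ_{d+1}(M) ≤ (n/(n−1)) · min over all diagonal entries of M`. -/
theorem lambda_succ_le_min_diag (n d : ℕ) (hn : 2 ≤ n) (hd : 1 ≤ d)
    (M : Matrix (Fin d × Fin n) (Fin d × Fin n) ℝ)
    (hM : M.PosSemidef)
    (hz : ∀ i : Fin d,
      M.mulVec (fun q : Fin d × Fin n => if q.1 = i then (1 : ℝ) else 0) = 0) :
    eigval M (d + 1) ≤ (n / (n - 1) : ℝ) * ⨅ q : Fin d × Fin n, M q q := by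
  have : Nonempty (Fin d × Fin n) := ⟨(⟨0, hd⟩, ⟨0, by omega⟩)⟩
  have : Nontrivial (Fin n) := Fin.nontrivial_iff_two_le.mpr hn
  obtain ⟨q, hq⟩ := exists_eq_ciInf_of_finite (f := fun q : Fin d × Fin n => M q q)
  simpa [hq] using eigval_card_add_one_le_mul_diag hM (mulVec_comp_fst_eq_zero hz) q

end
end
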